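/- In the GE model with Hamming bonus, for every n and every T ≥ 2 there exists a deterministic online algorithm that is (3 + 1/(T−1))-competitive: on every general-evolution Hamming-bonus instance with T time steps, the value of its output sequence is at least OPT/(3 + 1/(T−1)). -/

import Mathlib

/-- The value of a solution sequence under the Hamming bonus: total profit plus,
for each pair of consecutive steps, `n` minus the Hamming distance
(cardinality of the symmetric difference) of the two solutions. -/
noncomputable def hamVal (n T : ℕ) (p : ℕ → Finset (Fin n) → ℝ)
    (S : ℕ → Finset (Fin n)) : ℝ :=
  (∑ t ∈ Finset.range T, p t (S t)) +
    ∑ t ∈ Finset.range (T - 1),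
      ((n : ℝ) - (((S t \ S (t + 1)) ∪ (S (t + 1) \ S t)).card : ℝ))

/-- A valid multistage instance: the empty set is feasible at every time step and
profits are nonnegative. -/
def ValidInstance (n T : ℕ) (F : ℕ → Set (Finset (Fin n)))
    (p : ℕ → Finset (Fin n) → ℝ) : Prop :=
  (∀ t, t < T → (∅ : Finset (Fin n)) ∈ F t) ∧ ∀ t, t < T → ∀ S, 0 ≤ p t S

/-- A solution sequence: feasible at every time step. -/
def IsSol (n T : ℕ) (F : ℕ → Set (Finset (Fin n))) (S : ℕ → Finset (Fin n)) : Prop :=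
  ∀ t, t < T → S t ∈ F t

/-- A deterministic online algorithm: the solution output at time `t < T` depends
only on the data `(F_s, p_s)` revealed up to time `s ≤ t`. -/
def IsOnline (n T : ℕ)
    (alg : (ℕ → Set (Finset (Fin n))) → (ℕ → Finset (Fin n) → ℝ) → ℕ → Finset (Fin n)) :
    Prop :=
  ∀ F p F' p', ∀ t, t < T →
    (∀ s, s ≤ t → F s = F' s ∧ p s = p' s) → alg F p t = alg F' p' t

/-! At every step the algorithm maximises the profit minus the Hamming distance to its previous
choice minus the size of the new set. Comparing its choice `A (t + 1)` with `∅` shows that the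
transition into step `t + 1` earns at least `n + #A (t + 1) - #A t`, which telescopes: the
algorithm earns at least `(T - 1) n`. Comparing with `S (t + 1)` instead and adding the two bounds
shows that twice the algorithm's value pays for the whole profit of any solution `S` up to `n`.
The bonus of `S` is at most `(T - 1) n`, so
`f(S) ≤ 2 ALG + n + (T - 1) n ≤ (3 + 1 / (T - 1)) ALG`. -/

open Finset
open scoped symmDiff

noncomputable def argmaxOn {α β : Type*} [Nonempty α] [LinearOrder β] (s : Set α) (f : α → β) :
    α :=
  Classical.epsilon fun a => a ∈ s ∧ IsMaxOn f s a

lemma argmaxOn_spec {α β : Type*} [Nonempty α] [LinearOrder β] {s : Set α} (f : α → β)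
    (hs : s.Finite) (hne : s.Nonempty) : argmaxOn s f ∈ s ∧ IsMaxOn f s (argmaxOn s f) :=
  Classical.epsilon_spec (s.exists_max_image f hs hne)

section GreedyStep

variable {α : Type*} {F : Set (Finset α)} {p : Finset α → ℝ} {A B : Finset α}

lemma IsMaxOn.card_le_of_empty_mem (hA : IsMaxOn (fun Y => p Y - #Y) F A) (h0 : ∅ ∈ F)
    (hp : 0 ≤ p ∅) : (#A : ℝ) ≤ p A := by
  have h : p ∅ - #(∅ : Finset α) ≤ p A - #A := hA h0
  rw [card_empty, Nat.cast_zero] at h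
  linarith

lemma IsMaxOn.card_sub_card_le_of_empty_mem [DecidableEq α]
    (hA : IsMaxOn (fun Y => p Y - #(B ∆ Y) - #Y) F A) (h0 : ∅ ∈ F) (hp : 0 ≤ p ∅) :
    (#A : ℝ) - #B ≤ p A - #(B ∆ A) := by
  have h : p ∅ - #(B ∆ ∅) - #(∅ : Finset α) ≤ p A - #(B ∆ A) - #A := hA h0
  rw [show B ∆ ∅ = B from symmDiff_bot B, card_empty, Nat.cast_zero] at h
  linarith

end GreedyStep

lemma IsMaxOn.profit_add_card_sub_card_le {n : ℕ} {F : Set (Finset (Fin n))}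
    {p : Finset (Fin n) → ℝ} {A B Y : Finset (Fin n)}
    (hA : IsMaxOn (fun Y => p Y - #(B ∆ Y) - #Y) F A) (h0 : ∅ ∈ F) (hp : 0 ≤ p ∅) (hY : Y ∈ F) :
    p Y + (#A - #B) ≤ 2 * (p A + (n - #(B ∆ A))) := by
  have hYA : p Y - #(B ∆ Y) - #Y ≤ p A - #(B ∆ A) - #A := hA hY
  have hA0 := hA.card_sub_card_le_of_empty_mem h0 hp
  have hBY : (#(B ∆ Y) : ℝ) ≤ n := by exact_mod_cast card_finset_fin_le _
  have hYn : (#Y : ℝ) ≤ n := by exact_mod_cast card_finset_fin_le _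
  linarith

lemma IsMaxOn.profit_add_card_le {n : ℕ} {F : Set (Finset (Fin n))} {p : Finset (Fin n) → ℝ}
    {A Y : Finset (Fin n)} (hA : IsMaxOn (fun Y => p Y - #Y) F A) (h0 : ∅ ∈ F) (hp : 0 ≤ p ∅)
    (hY : Y ∈ F) : p Y + #A ≤ 2 * p A + n := by
  have hYA : p Y - #Y ≤ p A - #A := hA hY
  have hA0 := hA.card_le_of_empty_mem h0 hp
  have hYn : (#Y : ℝ) ≤ n := by exact_mod_cast card_finset_fin_le _
  linarith

noncomputable def greedy {n : ℕ} (F : ℕ → Set (Finset (Fin n))) (p : ℕ → Finset (Fin n) → ℝ) :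
    ℕ → Finset (Fin n)
  | 0 => argmaxOn (F 0) fun Y => p 0 Y - #Y
  | t + 1 => argmaxOn (F (t + 1)) fun Y => p (t + 1) Y - #(greedy F p t ∆ Y) - #Y

section Greedy

variable {n : ℕ} {F F' : ℕ → Set (Finset (Fin n))} {p p' : ℕ → Finset (Fin n) → ℝ}

lemma greedy_congr {t : ℕ} (h : ∀ s ≤ t, F s = F' s ∧ p s = p' s) :
    greedy F p t = greedy F' p' t := by
  induction t with
  | zero => rw [greedy, greedy, (h 0 le_rfl).1, (h 0 le_rfl).2]
  | succ t ih =>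
    rw [greedy, greedy, (h (t + 1) le_rfl).1, (h (t + 1) le_rfl).2,
      ih fun s hs => h s (hs.trans t.le_succ)]

lemma greedy_zero_spec (h0 : ∅ ∈ F 0) :
    greedy F p 0 ∈ F 0 ∧ IsMaxOn (fun Y => p 0 Y - #Y) (F 0) (greedy F p 0) :=
  argmaxOn_spec _ (Set.toFinite _) ⟨∅, h0⟩

lemma greedy_succ_spec {t : ℕ} (h0 : ∅ ∈ F (t + 1)) :
    greedy F p (t + 1) ∈ F (t + 1) ∧
      IsMaxOn (fun Y => p (t + 1) Y - #(greedy F p t ∆ Y) - #Y) (F (t + 1))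
        (greedy F p (t + 1)) :=
  argmaxOn_spec _ (Set.toFinite _) ⟨∅, h0⟩

lemma greedy_mem {T : ℕ} (h0 : ∀ t < T, ∅ ∈ F t) {t : ℕ} (ht : t < T) : greedy F p t ∈ F t := by
  cases t with
  | zero => exact (greedy_zero_spec (h0 0 ht)).1
  | succ t => exact (greedy_succ_spec (h0 _ ht)).1

end Greedy

lemma hamVal_succ (n K : ℕ) (p : ℕ → Finset (Fin n) → ℝ) (S : ℕ → Finset (Fin n)) :
    hamVal n (K + 1) p S =
      p 0 (S 0) + ∑ t ∈ range K, (p (t + 1) (S (t + 1)) + (n - #(S t ∆ S (t + 1)))) := by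
  rw [hamVal, Nat.add_sub_cancel, sum_range_succ', sum_add_distrib]
  simp only [symmDiff_def, sup_eq_union]
  ring

lemma hamVal_le_sum_add (n K : ℕ) (p : ℕ → Finset (Fin n) → ℝ) (S : ℕ → Finset (Fin n)) :
    hamVal n (K + 1) p S ≤ ∑ t ∈ range (K + 1), p t (S t) + K * n := by
  rw [hamVal, Nat.add_sub_cancel]
  gcongr
  calc _ ≤ ∑ _t ∈ range K, (n : ℝ) := sum_le_sum fun _ _ => sub_le_self _ (Nat.cast_nonneg _)
    _ = K * n := by simp

lemma sum_range_add_sub_le {K : ℕ} {u v c : ℕ → ℝ} (h : ∀ t < K, u t + (c (t + 1) - c t) ≤ v t) :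
    ∑ t ∈ range K, u t + (c K - c 0) ≤ ∑ t ∈ range K, v t := by
  rw [← sum_range_sub, ← sum_add_distrib]
  exact sum_le_sum fun t ht => h t (mem_range.1 ht)

section Competitive

variable {n K : ℕ} {F : ℕ → Set (Finset (Fin n))} {p : ℕ → Finset (Fin n) → ℝ}

lemma mul_le_hamVal_greedy (hV : ValidInstance n (K + 1) F p) :
    (K : ℝ) * n ≤ hamVal n (K + 1) p (greedy F p) := by
  set A := greedy F p
  have hstep : ∀ t < K, (n : ℝ) + (#(A (t + 1)) - #(A t)) ≤
      p (t + 1) (A (t + 1)) + (n - #(A t ∆ A (t + 1))) := fun t ht => by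
    have := (greedy_succ_spec (hV.1 (t + 1) (by omega))).2.card_sub_card_le_of_empty_mem
      (hV.1 (t + 1) (by omega)) (hV.2 (t + 1) (by omega) ∅)
    linarith
  have hsum := sum_range_add_sub_le (u := fun _ => (n : ℝ)) (c := fun t => (#(A t) : ℝ)) hstep
  have h0 : (#(A 0) : ℝ) ≤ p 0 (A 0) :=
    (greedy_zero_spec (hV.1 0 (by omega))).2.card_le_of_empty_mem (hV.1 0 (by omega))
      (hV.2 0 (by omega) ∅)
  rw [sum_const, card_range, nsmul_eq_mul] at hsum
  rw [hamVal_succ]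
  linarith [Nat.cast_nonneg (α := ℝ) #(A K)]

lemma sum_profit_le_hamVal_greedy (hV : ValidInstance n (K + 1) F p) {S : ℕ → Finset (Fin n)}
    (hS : IsSol n (K + 1) F S) :
    ∑ t ∈ range (K + 1), p t (S t) ≤ 2 * hamVal n (K + 1) p (greedy F p) + n := by
  set A := greedy F p
  have hstep : ∀ t < K, p (t + 1) (S (t + 1)) + (#(A (t + 1)) - #(A t)) ≤
      2 * (p (t + 1) (A (t + 1)) + (n - #(A t ∆ A (t + 1)))) := fun t ht =>
    (greedy_succ_spec (hV.1 (t + 1) (by omega))).2.profit_add_card_sub_card_le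
      (hV.1 (t + 1) (by omega)) (hV.2 (t + 1) (by omega) ∅) (hS (t + 1) (by omega))
  have hsum := sum_range_add_sub_le (c := fun t => (#(A t) : ℝ)) hstep
  have h0 : p 0 (S 0) + #(A 0) ≤ 2 * p 0 (A 0) + n :=
    (greedy_zero_spec (hV.1 0 (by omega))).2.profit_add_card_le (hV.1 0 (by omega))
      (hV.2 0 (by omega) ∅) (hS 0 (by omega))
  rw [← mul_sum] at hsum
  rw [hamVal_succ, sum_range_succ']
  linarith [Nat.cast_nonneg (α := ℝ) #(A K)]

end Competitive

lemma div_three_add_inv_le {K n a v : ℝ} (hK : 0 < K) (ha : K * n ≤ a)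
    (hv : v ≤ 2 * a + n + K * n) : v / (3 + 1 / K) ≤ a := by
  have hn : n ≤ a / K := by rw [le_div_iff₀ hK]; linarith
  rw [div_le_iff₀ (by positivity), mul_add, mul_one_div]
  linarith

/-- In the GE model with Hamming bonus, for every `n` and every `T ≥ 2` there is a
deterministic online algorithm that is `(3 + 1/(T-1))`-competitive: on every valid
general-evolution instance its output is feasible and has value at least
`OPT / (3 + 1/(T-1))`. -/
theorem stmt5 (n T : ℕ) (hT : 2 ≤ T) :
    ∃ alg : (ℕ → Set (Finset (Fin n))) → (ℕ → Finset (Fin n) → ℝ) → ℕ → Finset (Fin n),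
      IsOnline n T alg ∧
      ∀ F p, ValidInstance n T F p →
        (∀ t, t < T → alg F p t ∈ F t) ∧
        ∀ S : ℕ → Finset (Fin n), IsSol n T F S →
          hamVal n T p S / (3 + 1 / ((T : ℝ) - 1)) ≤ hamVal n T p (alg F p) := by
  obtain ⟨K, rfl⟩ : ∃ K, T = K + 1 := ⟨T - 1, by omega⟩
  refine ⟨greedy, fun F p F' p' t _ h => greedy_congr h,
    fun F p hV => ⟨fun t => greedy_mem hV.1, fun S hS => ?_⟩⟩
  have hK : (0 : ℝ) < K := by exact_mod_cast (by omega : 0 < K)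
  rw [show ((K + 1 : ℕ) : ℝ) - 1 = K by push_cast; ring]
  refine div_three_add_inv_le hK (mul_le_hamVal_greedy hV) ?_
  linarith [hamVal_le_sum_add n K p S, sum_profit_le_hamVal_greedy hV hS]
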